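/- Let D_k be the Dirichlet kernel on [−π,π]. For every ε ∈ (0, π] there exists a constant C (independent of k and ε) such that (2k+1)⁻¹ ∫_{−π}^{π} ∫_{−π}^{π} 1_{|x₁−x₂|>ε} D_k(x₁−x₂)² dx₁ dx₂ ≤ C ( ε + 1/(ε² k) ). In particular, if ε_k → 0 with ε_k √k → ∞, this quantity tends to 0 as k → ∞. -/

import Mathlib

open Real MeasureTheory Filter

/-- The Dirichlet kernel. -/
noncomputable def dirichletKernel (k : ℕ) (u : ℝ) : ℝ :=
  Real.sin (((k : ℝ) + 1 / 2) * u) / (2 * π * Real.sin (u / 2))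

/-- The normalized off-diagonal mass of the Fourier projection kernel:
`(2k+1)⁻¹ ∫∫_{[−π,π]²} 1_{|x₁−x₂|>ε} D_k(x₁−x₂)² dx₁ dx₂`. -/
noncomputable def dirichletOffDiag (k : ℕ) (ε : ℝ) : ℝ :=
  (2 * (k : ℝ) + 1)⁻¹ * ∫ x₁ in Set.Icc (-π) π, ∫ x₂ in Set.Icc (-π) π,
    (if ε < |x₁ - x₂| then dirichletKernel k (x₁ - x₂) ^ 2 else 0)

open Set
open scoped Interval

/-!
For `ε ≤ |u| ≤ 2π - ε` Jordan's inequality gives `|sin (u/2)| ≥ ε/π`, hence `D_k(u)² ≤ 1/(4ε²)`;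
after normalisation this part contributes `O(1/(ε² k))`. The rest of the off-diagonal region,
`|x₁ - x₂| > 2π - ε`, lies in two corners of the square where `D_k` is large again by
periodicity. There, with `a = π - |x₁|` and `b = π - |x₂|`, combining `|D_k| ≤ (2k+1)/(2π)` with
the bound above gives `D_k(x₁ - x₂)² ≤ (2k+1)/(4π(a+b)) ≤ (2k+1)/(8π √a √b)`, which splits into a
product of the weights `(π - |x|)^(-1/2)` supported on `π - ε < |x|`, each of integral `4√ε`; so
the corners contribute `O(ε)`.
-/

theorem Real.abs_sin_nat_mul_le (n : ℕ) (x : ℝ) : |sin (n * x)| ≤ n * |sin x| := by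
  induction n with
  | zero => simp
  | succ n ih =>
    calc |sin ((n + 1 : ℕ) * x)| = |sin (n * x) * cos x + cos (n * x) * sin x| := by
          push_cast; rw [add_mul, one_mul, sin_add]
      _ ≤ |sin (n * x)| * |cos x| + |cos (n * x)| * |sin x| := by
          rw [← abs_mul, ← abs_mul]; exact abs_add_le _ _
      _ ≤ n * |sin x| * 1 + 1 * |sin x| := by
          gcongr
          exacts [abs_cos_le_one x, abs_cos_le_one _]
      _ = (n + 1 : ℕ) * |sin x| := by push_cast; ring

theorem abs_dirichletKernel_le (k : ℕ) (u : ℝ) :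
    |dirichletKernel k u| ≤ (2 * k + 1) / (2 * π) := by
  have hnum : |sin ((k + 1 / 2) * u)| ≤ (2 * k + 1) * |sin (u / 2)| := by
    have := Real.abs_sin_nat_mul_le (2 * k + 1) (u / 2)
    push_cast at this
    rwa [show ((k : ℝ) + 1 / 2) * u = (2 * k + 1) * (u / 2) by ring]
  rw [dirichletKernel, abs_div, abs_mul, abs_of_pos two_pi_pos]
  rcases (abs_nonneg (sin (u / 2))).eq_or_lt with hs | hs
  · rw [← hs, mul_zero, div_zero]; positivity
  · rw [div_le_div_iff₀ (by positivity) two_pi_pos]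
    nlinarith [two_pi_pos]

theorem abs_dirichletKernel_le_inv (k : ℕ) (u : ℝ) :
    |dirichletKernel k u| ≤ (2 * π * |sin (u / 2)|)⁻¹ := by
  rw [dirichletKernel, abs_div, abs_mul, abs_of_pos two_pi_pos, div_eq_mul_inv]
  exact mul_le_of_le_one_left (by positivity) (abs_sin_le_one _)

theorem Real.div_pi_le_abs_sin_half {t u : ℝ} (ht : 0 ≤ t) (h₁ : t ≤ |u|) (h₂ : |u| ≤ 2 * π - t) :
    t / π ≤ |sin (u / 2)| := by
  have hu : |sin (u / 2)| = sin (|u| / 2) := by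
    rw [abs_sin_half, ← cos_abs, ← abs_sin_half, abs_of_nonneg]
    exact sin_nonneg_of_nonneg_of_le_pi (by positivity) (by linarith [pi_pos])
  rw [hu]
  rcases le_total (|u| / 2) (π / 2) with h | h
  · calc t / π ≤ 2 / π * (|u| / 2) := by field_simp; linarith
      _ ≤ sin (|u| / 2) := mul_le_sin (by positivity) h
  · calc t / π ≤ 2 / π * (π - |u| / 2) := by field_simp; linarith
      _ ≤ sin (π - |u| / 2) := mul_le_sin (by linarith) (by linarith)
      _ = sin (|u| / 2) := sin_pi_sub _

theorem abs_dirichletKernel_le_of_le_abs {t u : ℝ} (k : ℕ) (ht : 0 < t) (h₁ : t ≤ |u|)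
    (h₂ : |u| ≤ 2 * π - t) : |dirichletKernel k u| ≤ (2 * t)⁻¹ :=
  calc |dirichletKernel k u| ≤ (2 * π * |sin (u / 2)|)⁻¹ := abs_dirichletKernel_le_inv k u
    _ ≤ (2 * π * (t / π))⁻¹ := by
        gcongr; exact Real.div_pi_le_abs_sin_half ht.le h₁ h₂
    _ = (2 * t)⁻¹ := by field_simp

noncomputable def boundaryWeight (ε x : ℝ) : ℝ :=
  if π - ε < |x| then (π - |x|) ^ (-(1 / 2) : ℝ) else 0

theorem boundaryWeight_nonneg {ε x : ℝ} (hx : |x| ≤ π) : 0 ≤ boundaryWeight ε x := by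
  unfold boundaryWeight
  split_ifs
  exacts [rpow_nonneg (by linarith) _, le_rfl]

theorem boundaryWeight_of_lt {ε x : ℝ} (hx : |x| ≤ π) (h : π - ε < |x|) :
    boundaryWeight ε x = (√(π - |x|))⁻¹ := by
  rw [boundaryWeight, if_pos h, sqrt_eq_rpow, rpow_neg (by linarith)]

theorem ite_dirichletKernel_sub_sq_le (k : ℕ) {ε x₁ x₂ : ℝ} (hε : 0 < ε)
    (hx₁ : |x₁| < π) (hx₂ : |x₂| < π) :
    (if ε < |x₁ - x₂| then dirichletKernel k (x₁ - x₂) ^ 2 else 0) ≤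
      (4 * ε ^ 2)⁻¹ + (2 * k + 1) / (8 * π) * boundaryWeight ε x₁ * boundaryWeight ε x₂ := by
  have hw : 0 ≤ (2 * k + 1) / (8 * π) * boundaryWeight ε x₁ * boundaryWeight ε x₂ := by
    have := boundaryWeight_nonneg (ε := ε) hx₁.le
    have := boundaryWeight_nonneg (ε := ε) hx₂.le
    positivity
  split_ifs with h
  case neg => exact add_nonneg (by positivity) hw
  rcases le_or_gt |x₁ - x₂| (2 * π - ε) with hfar | hnear
  · have hD := abs_dirichletKernel_le_of_le_abs k hε h.le hfar
    calc dirichletKernel k (x₁ - x₂) ^ 2 ≤ ((2 * ε)⁻¹) ^ 2 := by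
          rw [← sq_abs]; gcongr
      _ = (4 * ε ^ 2)⁻¹ := by ring
      _ ≤ _ := le_add_of_nonneg_right hw
  · set a := π - |x₁|
    set b := π - |x₂|
    set s := 2 * π - |x₁ - x₂|
    have ha : 0 < a := by linarith
    have hb : 0 < b := by linarith
    have hab : a + b ≤ s := by linarith [abs_sub x₁ x₂]
    have hs : s ≤ |x₁ - x₂| := by linarith
    have hD := abs_dirichletKernel_le_of_le_abs k (by linarith) hs (by linarith)
    have hamgm : 2 * (√a * √b) ≤ a + b := by
      nlinarith [sq_nonneg (√a - √b), sq_sqrt ha.le, sq_sqrt hb.le]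
    rw [boundaryWeight_of_lt hx₁.le (by linarith), boundaryWeight_of_lt hx₂.le (by linarith)]
    calc dirichletKernel k (x₁ - x₂) ^ 2
        = |dirichletKernel k (x₁ - x₂)| * |dirichletKernel k (x₁ - x₂)| := by rw [← sq_abs, sq]
      _ ≤ (2 * k + 1) / (2 * π) * (2 * s)⁻¹ :=
          mul_le_mul (abs_dirichletKernel_le k _) hD (abs_nonneg _) (by positivity)
      _ ≤ (2 * k + 1) / (2 * π) * (2 * (2 * (√a * √b)))⁻¹ := by
          gcongr
          linarith
      _ = (2 * k + 1) / (8 * π) * (√a)⁻¹ * (√b)⁻¹ := by ring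
      _ ≤ _ := le_add_of_nonneg_left (by positivity)

section Even

variable {E : Type*} [NormedAddCommGroup E] {f : ℝ → E} {a : ℝ}

theorem IntervalIntegrable.neg_of_even (hf : ∀ x, f (-x) = f x)
    (h : IntervalIntegrable f volume 0 a) : IntervalIntegrable f volume (-a) 0 := by
  have h' := (IntervalIntegrable.iff_comp_neg (a := 0) (b := a)).1 h
  simp only [hf, neg_zero] at h'
  exact h'.symm

theorem intervalIntegral.integral_symm_eq_two_smul_of_even [NormedSpace ℝ E]
    (hf : ∀ x, f (-x) = f x) (h : IntervalIntegrable f volume 0 a) :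
    ∫ x in -a..a, f x = 2 • ∫ x in 0..a, f x := by
  have h' : ∫ x in -a..0, f x = ∫ x in 0..a, f x := by
    simpa only [hf, neg_zero, neg_neg] using integral_comp_neg (a := -a) (b := 0) f
  rw [← integral_add_adjacent_intervals (h.neg_of_even hf) h, h', two_nsmul]

end Even

section BoundaryWeight

variable {ε : ℝ}

theorem boundaryWeight_neg (x : ℝ) : boundaryWeight ε (-x) = boundaryWeight ε x := by
  simp only [boundaryWeight, abs_neg]

theorem boundaryWeight_eqOn_Ioc_zero (hεπ : ε ≤ π) :
    EqOn (boundaryWeight ε) 0 (Ι 0 (π - ε)) := by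
  intro x hx
  rw [uIoc_of_le (by linarith), mem_Ioc] at hx
  rw [boundaryWeight, abs_of_pos hx.1, if_neg hx.2.not_gt, Pi.zero_apply]

theorem boundaryWeight_eqOn_Ioc_pi (hε : 0 ≤ ε) (hεπ : ε ≤ π) :
    EqOn (boundaryWeight ε) (fun x ↦ (π - x) ^ (-(1 / 2) : ℝ)) (Ι (π - ε) π) := by
  intro x hx
  rw [uIoc_of_le (by linarith), mem_Ioc] at hx
  rw [boundaryWeight, abs_of_nonneg (by linarith), if_pos hx.1]

theorem intervalIntegrable_rpow_neg_half_pi_sub :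
    IntervalIntegrable (fun x ↦ (π - x) ^ (-(1 / 2) : ℝ)) volume (π - ε) π := by
  simpa using (intervalIntegral.intervalIntegrable_rpow' (a := ε) (b := 0) (r := -(1 / 2))
    (by norm_num)).comp_sub_left π

theorem intervalIntegrable_boundaryWeight (hε : 0 ≤ ε) (hεπ : ε ≤ π) :
    IntervalIntegrable (boundaryWeight ε) volume 0 π :=
  ((intervalIntegrable_const (c := (0 : ℝ))).congr (boundaryWeight_eqOn_Ioc_zero hεπ).symm).trans
    (intervalIntegrable_rpow_neg_half_pi_sub.congr (boundaryWeight_eqOn_Ioc_pi hε hεπ).symm)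

theorem integral_boundaryWeight (hε : 0 ≤ ε) (hεπ : ε ≤ π) :
    ∫ x in 0..π, boundaryWeight ε x = 2 * √ε := by
  rw [← intervalIntegral.integral_add_adjacent_intervals (b := π - ε)
      ((intervalIntegrable_const (c := (0 : ℝ))).congr (boundaryWeight_eqOn_Ioc_zero hεπ).symm)
      (intervalIntegrable_rpow_neg_half_pi_sub.congr (boundaryWeight_eqOn_Ioc_pi hε hεπ).symm),
    intervalIntegral.integral_congr_ae (ae_of_all _ (boundaryWeight_eqOn_Ioc_zero hεπ)),
    intervalIntegral.integral_congr_ae (ae_of_all _ (boundaryWeight_eqOn_Ioc_pi hε hεπ)),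
    intervalIntegral.integral_comp_sub_left (fun x ↦ x ^ (-(1 / 2) : ℝ)),
    integral_rpow (by norm_num)]
  simp only [Pi.zero_apply]
  norm_num [sqrt_eq_rpow]
  ring

theorem integrableOn_boundaryWeight (hε : 0 ≤ ε) (hεπ : ε ≤ π) :
    IntegrableOn (boundaryWeight ε) (Ioo (-π) π) :=
  (intervalIntegrable_iff_integrableOn_Ioo_of_le (by linarith)).1
    (((intervalIntegrable_boundaryWeight hε hεπ).neg_of_even boundaryWeight_neg).trans
      (intervalIntegrable_boundaryWeight hε hεπ))

theorem setIntegral_boundaryWeight (hε : 0 ≤ ε) (hεπ : ε ≤ π) :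
    ∫ x in Ioo (-π) π, boundaryWeight ε x = 4 * √ε := by
  rw [← integral_Ioc_eq_integral_Ioo, ← intervalIntegral.integral_of_le (by linarith),
    intervalIntegral.integral_symm_eq_two_smul_of_even boundaryWeight_neg
      (intervalIntegrable_boundaryWeight hε hεπ),
    integral_boundaryWeight hε hεπ, nsmul_eq_mul]
  ring

end BoundaryWeight

theorem integral_integral_le_of_le_add_mul {α β : Type*} [MeasurableSpace α] [MeasurableSpace β]
    {μ : Measure α} {ν : Measure β} [IsFiniteMeasure μ] [IsFiniteMeasure ν] {f : α → β → ℝ}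
    {φ : α → ℝ} {ψ : β → ℝ} {A B : ℝ} (hf : ∀ x y, 0 ≤ f x y) (hφ : Integrable φ μ)
    (hψ : Integrable ψ ν) (h : ∀ᵐ x ∂μ, ∀ᵐ y ∂ν, f x y ≤ A + B * φ x * ψ y) :
    ∫ x, ∫ y, f x y ∂ν ∂μ ≤ A * ν.real univ * μ.real univ + B * (∫ x, φ x ∂μ) * ∫ y, ψ y ∂ν := by
  have hinner : ∀ᵐ x ∂μ, ∫ y, f x y ∂ν ≤ A * ν.real univ + B * (∫ y, ψ y ∂ν) * φ x := by
    filter_upwards [h] with x hx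
    calc ∫ y, f x y ∂ν ≤ ∫ y, (A + B * φ x * ψ y) ∂ν :=
          integral_mono_of_nonneg (ae_of_all _ (hf x))
            ((integrable_const A).add (hψ.const_mul _)) hx
      _ = A * ν.real univ + B * (∫ y, ψ y ∂ν) * φ x := by
          rw [integral_add (integrable_const _) (hψ.const_mul _), integral_const,
            integral_const_mul, smul_eq_mul]
          ring
  calc ∫ x, ∫ y, f x y ∂ν ∂μ ≤ ∫ x, (A * ν.real univ + B * (∫ y, ψ y ∂ν) * φ x) ∂μ :=
        integral_mono_of_nonneg (ae_of_all _ fun x ↦ integral_nonneg (hf x))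
          ((integrable_const _).add (hφ.const_mul _)) hinner
    _ = _ := by
        rw [integral_add (integrable_const _) (hφ.const_mul _), integral_const,
          integral_const_mul, smul_eq_mul]
        ring

theorem dirichletOffDiag_nonneg (k : ℕ) (ε : ℝ) : 0 ≤ dirichletOffDiag k ε := by
  unfold dirichletOffDiag
  refine mul_nonneg (by positivity) (integral_nonneg fun x₁ ↦ integral_nonneg fun x₂ ↦ ?_)
  split_ifs <;> positivity

theorem dirichletOffDiag_le (k : ℕ) {ε : ℝ} (hε : 0 < ε) (hεπ : ε ≤ π) :
    dirichletOffDiag k ε ≤ (π / ε) ^ 2 / (2 * k + 1) + 2 * ε / π := by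
  have hπ : -π ≤ π := by linarith [pi_pos]
  have hvol : volume.real (Ioo (-π) π) = 2 * π := by
    rw [volume_real_Ioo_of_le hπ]; ring
  have hpointwise : ∀ᵐ x₁ ∂volume.restrict (Ioo (-π) π), ∀ᵐ x₂ ∂volume.restrict (Ioo (-π) π),
      (if ε < |x₁ - x₂| then dirichletKernel k (x₁ - x₂) ^ 2 else 0) ≤
        (4 * ε ^ 2)⁻¹ + (2 * k + 1) / (8 * π) * boundaryWeight ε x₁ * boundaryWeight ε x₂ := by
    filter_upwards [ae_restrict_mem measurableSet_Ioo] with x₁ hx₁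
    filter_upwards [ae_restrict_mem measurableSet_Ioo] with x₂ hx₂
    exact ite_dirichletKernel_sub_sq_le k hε (abs_lt.2 hx₁) (abs_lt.2 hx₂)
  have hw := integrableOn_boundaryWeight hε.le hεπ
  have hdouble := integral_integral_le_of_le_add_mul
    (fun x₁ x₂ ↦ by split_ifs <;> positivity) hw hw hpointwise
  rw [measureReal_restrict_apply_univ, hvol, setIntegral_boundaryWeight hε.le hεπ] at hdouble
  unfold dirichletOffDiag
  simp_rw [integral_Icc_eq_integral_Ioo]
  calc _ ≤ (2 * (k : ℝ) + 1)⁻¹ * ((4 * ε ^ 2)⁻¹ * (2 * π) * (2 * π) +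
        (2 * k + 1) / (8 * π) * (4 * √ε) * (4 * √ε)) := by gcongr
    _ = _ := by
        field_simp
        rw [sq_sqrt hε.le]
        ring

theorem dirichletOffDiag_le_eight_mul {k : ℕ} (hk : 1 ≤ k) {ε : ℝ} (hε : 0 < ε) (hεπ : ε ≤ π) :
    dirichletOffDiag k ε ≤ 8 * (ε + 1 / (ε ^ 2 * k)) := by
  have hk : (1 : ℝ) ≤ k := by exact_mod_cast hk
  have h₁ : (π / ε) ^ 2 / (2 * k + 1) ≤ 8 * (1 / (ε ^ 2 * k)) := by
    rw [div_pow, div_div, mul_one_div, div_le_div_iff₀ (by positivity) (by positivity)]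
    have : π ^ 2 ≤ 16 := by nlinarith [pi_le_four, pi_pos]
    nlinarith [mul_le_mul_of_nonneg_right this (by positivity : (0 : ℝ) ≤ ε ^ 2 * k)]
  have h₂ : 2 * ε / π ≤ 8 * ε := by
    rw [div_le_iff₀ pi_pos]; nlinarith [pi_gt_three]
  linarith [dirichletOffDiag_le k hε hεπ]

theorem tendsto_one_div_sq_mul_natCast_of_tendsto_mul_sqrt {ε : ℕ → ℝ}
    (h : Tendsto (fun k ↦ ε k * √k) atTop atTop) :
    Tendsto (fun k : ℕ ↦ 1 / (ε k ^ 2 * k)) atTop (nhds 0) := by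
  have heq : (fun k : ℕ ↦ 1 / (ε k ^ 2 * k)) = fun k ↦ ((ε k * √k) ^ 2)⁻¹ := by
    ext k; rw [one_div, mul_pow, sq_sqrt k.cast_nonneg]
  rw [heq]
  exact tendsto_inv_atTop_zero.comp ((tendsto_pow_atTop two_ne_zero).comp h)

/-- there is a constant `C` (independent of `k` and `ε`) with
`(2k+1)⁻¹ ∫∫ 1_{|x₁−x₂|>ε} D_k(x₁−x₂)² ≤ C (ε + 1/(ε²k))` for all `k ≥ 1` and
`ε ∈ (0, π]`; in particular, if `ε_k → 0` with `ε_k √k → ∞`, this quantity tends to `0`. -/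
theorem dirichlet_off_diagonal :
    (∃ C > 0, ∀ k : ℕ, 1 ≤ k → ∀ ε : ℝ, 0 < ε → ε ≤ π →
      dirichletOffDiag k ε ≤ C * (ε + 1 / (ε ^ 2 * (k : ℝ))))
    ∧ (∀ ε : ℕ → ℝ, (∀ k, 0 < ε k) → (∀ k, ε k ≤ π) →
        Tendsto ε atTop (nhds 0) →
        Tendsto (fun k => ε k * Real.sqrt k) atTop atTop →
        Tendsto (fun k => dirichletOffDiag k (ε k)) atTop (nhds 0)) := by
  refine ⟨⟨8, by norm_num, fun k hk ε hε hεπ ↦ dirichletOffDiag_le_eight_mul hk hε hεπ⟩,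
    fun ε hε hεπ hε_lim hε_sqrt ↦ ?_⟩
  have hmajorant := (hε_lim.add
    (tendsto_one_div_sq_mul_natCast_of_tendsto_mul_sqrt hε_sqrt)).const_mul 8
  rw [add_zero, mul_zero] at hmajorant
  refine squeeze_zero' (.of_forall fun k ↦ dirichletOffDiag_nonneg k _) ?_ hmajorant
  filter_upwards [eventually_ge_atTop 1] with k hk
  exact dirichletOffDiag_le_eight_mul hk (hε k) (hεπ k)
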